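/- If a rooted binary phylogenetic network N displays a rooted binary phylogenetic tree T (i.e., some subgraph of N is a subdivision of T), then there exists an embedding function on the display graph D(N,T), and conversely. -/

import Mathlib

namespace TreeContainment

open scoped Classical

variable {V Λ : Type}

/-- A directed graph with an explicit vertex set. -/
structure DGraph (V : Type) where
  verts : Set V
  Arc : V → V → Prop
  arc_left : ∀ ⦃u v : V⦄, Arc u v → u ∈ verts
  arc_right : ∀ ⦃u v : V⦄, Arc u v → v ∈ verts

noncomputable def DGraph.inDeg (G : DGraph V) (v : V) : ℕ := {u : V | G.Arc u v}.ncard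
noncomputable def DGraph.outDeg (G : DGraph V) (v : V) : ℕ := {u : V | G.Arc v u}.ncard
def DGraph.Acyclic (G : DGraph V) : Prop := ∀ v : V, ¬ Relation.TransGen G.Arc v v

def IsSubgraph (H G : DGraph V) : Prop :=
  H.verts ⊆ G.verts ∧ ∀ ⦃u v⦄, H.Arc u v → G.Arc u v

/-- The consecutive pairs (arcs) of a list of vertices. -/
def listArcs (p : List V) : List (V × V) := p.zip p.tail

def IsArcOf (p : List V) (a b : V) : Prop := (a, b) ∈ listArcs p

lemma isArcOf_mem_left {p : List V} {a b : V} (h : IsArcOf p a b) : a ∈ p :=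
  (List.of_mem_zip h).1

lemma isArcOf_mem_right {p : List V} {a b : V} (h : IsArcOf p a b) : b ∈ p :=
  List.mem_of_mem_tail (List.of_mem_zip h).2

/-- `p` is a directed path from `u` to `v` with respect to the arc relation `A`. -/
def DipathFrom (A : V → V → Prop) (u v : V) (p : List V) : Prop :=
  p.Chain' A ∧ p.Nodup ∧ p.head? = some u ∧ p.getLast? = some v

/-- Rooted binary phylogenetic network. -/
def IsBinPhyloNet (N : DGraph V) : Prop :=
  N.Acyclic ∧ N.verts.Finite ∧ N.verts.Nonempty ∧
  (∃! ρ, ρ ∈ N.verts ∧ N.inDeg ρ = 0) ∧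
  ∀ v ∈ N.verts,
    (N.inDeg v = 0 ∧ N.outDeg v = 2) ∨ (N.inDeg v = 1 ∧ N.outDeg v = 0) ∨
    (N.inDeg v = 2 ∧ N.outDeg v = 1) ∨ (N.inDeg v = 1 ∧ N.outDeg v = 2)

/-- Rooted binary phylogenetic tree: a binary phylogenetic network without reticulations. -/
def IsBinPhyloTree (T : DGraph V) : Prop :=
  IsBinPhyloNet T ∧ ∀ v ∈ T.verts, T.inDeg v ≤ 1

def leaves (G : DGraph V) : Set V :=
  {v : V | v ∈ G.verts ∧ G.inDeg v = 1 ∧ G.outDeg v = 0}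

/-- Equally labelled leaves of `N` and `T` are identified: the common vertices of the two
graphs are exactly the leaves of each side. -/
def SharedLeaves (N T : DGraph V) : Prop :=
  N.verts ∩ T.verts = leaves N ∧ N.verts ∩ T.verts = leaves T

/-- A witness that `H` is a subdivision of the tree `Tg`. -/
structure SubdivWitness (H Tg : DGraph V) where
  vmap : V → V
  pmap : V → V → List V
  vmap_mem : ∀ u ∈ Tg.verts, vmap u ∈ H.verts
  inj : ∀ u ∈ Tg.verts, ∀ v ∈ Tg.verts, vmap u = vmap v → u = v
  path_spec : ∀ ⦃u v⦄, Tg.Arc u v → DipathFrom H.Arc (vmap u) (vmap v) (pmap u v)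
  path_len : ∀ ⦃u v⦄, Tg.Arc u v → 2 ≤ (pmap u v).length
  internal_new : ∀ ⦃u v⦄, Tg.Arc u v → ∀ z ∈ pmap u v, z ≠ vmap u → z ≠ vmap v →
    ∀ w ∈ Tg.verts, vmap w ≠ z
  internal_disjoint : ∀ ⦃u v u' v'⦄, Tg.Arc u v → Tg.Arc u' v' → (u, v) ≠ (u', v') →
    ∀ z, z ∈ pmap u v → z ∈ pmap u' v' →
      (z = vmap u ∨ z = vmap v) ∧ (z = vmap u' ∨ z = vmap v')
  arcs_cover : ∀ a b, H.Arc a b → ∃ u v, Tg.Arc u v ∧ IsArcOf (pmap u v) a b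
  verts_cover : ∀ z ∈ H.verts, (∃ u ∈ Tg.verts, vmap u = z) ∨ ∃ u v, Tg.Arc u v ∧ z ∈ pmap u v

/-- `N` displays `T`: some subgraph of `N` is a subdivision of `T`, respecting
the (identified) leaf labels. -/
def Displays (N T : DGraph V) : Prop :=
  ∃ H : DGraph V, IsSubgraph H N ∧
    ∃ w : SubdivWitness H T, ∀ u ∈ T.verts ∩ N.verts, w.vmap u = u

/-- An embedding function of the tree `Tg` into the network `Ng`
(an embedding function on the display graph `D(Ng,Tg)`). -/
structure EmbOn (Tg Ng : DGraph V) where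
  vmap : V → V
  pmap : V → V → List V
  vmap_mem : ∀ u ∈ Tg.verts, vmap u ∈ Ng.verts
  path_spec : ∀ ⦃u v⦄, Tg.Arc u v → DipathFrom Ng.Arc (vmap u) (vmap v) (pmap u v)
  inj : ∀ u ∈ Tg.verts, ∀ v ∈ Tg.verts, vmap u = vmap v → u = v
  fixes : ∀ u ∈ Tg.verts ∩ Ng.verts, vmap u = u
  arc_disjoint : ∀ ⦃u v u' v'⦄, Tg.Arc u v → Tg.Arc u' v' → (u, v) ≠ (u', v') →
    ∀ e, e ∈ listArcs (pmap u v) → e ∉ listArcs (pmap u' v')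
  share : ∀ ⦃u v u' v'⦄, Tg.Arc u v → Tg.Arc u' v' → (u, v) ≠ (u', v') →
    ∀ z, z ∈ pmap u v → z ∈ pmap u' v' →
      ∃ w, (w = u ∨ w = v) ∧ (w = u' ∨ w = v') ∧ vmap w = z

/-- The subgraph of the network consisting of all arcs lying on some embedding path. -/
def usedSubgraph (Tg Ng : DGraph V) (φ : EmbOn Tg Ng) : DGraph V where
  verts := {z : V | ∃ u v, Tg.Arc u v ∧ z ∈ φ.pmap u v}
  Arc a b := ∃ u v, Tg.Arc u v ∧ IsArcOf (φ.pmap u v) a b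
  arc_left := by
    rintro a b ⟨u, v, huv, harc⟩
    exact ⟨u, v, huv, isArcOf_mem_left harc⟩
  arc_right := by
    rintro a b ⟨u, v, huv, harc⟩
    exact ⟨u, v, huv, isArcOf_mem_right harc⟩

/-- A display graph: a DAG whose vertex set is covered by a tree side `VT`
and a network side `VN`, satisfying the degree conditions of the paper. -/
structure DispGraph (V : Type) extends DGraph V where
  VT : Set V
  VN : Set V
  union_eq : VT ∪ VN = verts
  finite : verts.Finite
  acyclic : ∀ v : V, ¬ Relation.TransGen Arc v v
  tree_indeg : ∀ v : V, {u : V | Arc u v ∧ u ∈ VT ∧ v ∈ VT}.ncard ≤ 1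
  indeg_le : ∀ v : V, {u : V | Arc u v}.ncard ≤ 2
  outdeg_le : ∀ v : V, {u : V | Arc v u}.ncard ≤ 2
  totdeg_le : ∀ v : V, {u : V | Arc u v}.ncard + {u : V | Arc v u}.ncard ≤ 3
  shared_out : ∀ v ∈ VT ∩ VN, ∀ u, ¬ Arc v u
  shared_in_T : ∀ v ∈ VT ∩ VN, {u : V | Arc u v ∧ u ∈ VT}.ncard ≤ 1
  shared_in_N : ∀ v ∈ VT ∩ VN, {u : V | Arc u v ∧ u ∈ VN}.ncard ≤ 1

/-- The tree side of a display graph. -/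
def DispGraph.treeSide (G : DispGraph V) : DGraph V where
  verts := G.VT
  Arc u v := G.Arc u v ∧ u ∈ G.VT ∧ v ∈ G.VT
  arc_left := by intro u v h; exact h.2.1
  arc_right := by intro u v h; exact h.2.2

/-- The network side of a display graph. -/
def DispGraph.netSide (G : DispGraph V) : DGraph V where
  verts := G.VN
  Arc u v := G.Arc u v ∧ u ∈ G.VN ∧ v ∈ G.VN
  arc_left := by intro u v h; exact h.2.1
  arc_right := by intro u v h; exact h.2.2

def DispGraph.TArc (G : DispGraph V) (u v : V) : Prop := G.treeSide.Arc u v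
def DispGraph.NArc (G : DispGraph V) (u v : V) : Prop := G.netSide.Arc u v
noncomputable def DispGraph.inDeg (G : DispGraph V) : V → ℕ := G.toDGraph.inDeg
noncomputable def DispGraph.outDeg (G : DispGraph V) : V → ℕ := G.toDGraph.outDeg

/-- An embedding function on a display graph: an embedding of its tree side into
its network side. -/
abbrev EmbFun (G : DispGraph V) := EmbOn G.treeSide G.netSide

/-- The data of a containment structure: a display graph, an embedding function on it,
and an isolabelling into vertices of the ambient display graph or labels from `Λ`. -/
structure CStruct (V Λ : Type) where
  G : DispGraph V
  emb : EmbFun G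
  ι : V → V ⊕ Λ

/-- Relabelling a containment structure by a restriction function. -/
def CStruct.relabel (g : V ⊕ Λ → V ⊕ Λ) (χ : CStruct V Λ) : CStruct V Λ :=
  ⟨χ.G, χ.emb, fun v => g (χ.ι v)⟩

/-- `ι` is an `(S,Y)`-isolabelling on the display graph of `χ`, relative to the
ambient display graph `Din`. -/
def IsIsolabelling (Din : DispGraph V) (S : Set V) (Ys : Set Λ) (χ : CStruct V Λ) : Prop :=
  (∀ u ∈ χ.G.verts, (∃ s ∈ S, χ.ι u = Sum.inl s) ∨ (∃ y ∈ Ys, χ.ι u = Sum.inr y)) ∧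
  (∀ s ∈ S, ∃ u ∈ χ.G.verts, χ.ι u = Sum.inl s) ∧
  (∀ u ∈ χ.G.verts, ∀ s ∈ S, χ.ι u = Sum.inl s →
    (s ∈ Din.VN → u ∈ χ.G.VN) ∧ (s ∈ Din.VT → u ∈ χ.G.VT)) ∧
  (∀ u ∈ χ.G.verts, ∀ v ∈ χ.G.verts, ∀ s ∈ S, χ.ι u = Sum.inl s → χ.ι v = Sum.inl s → u = v) ∧
  (∀ u ∈ χ.G.verts, ∀ v ∈ χ.G.verts, ∀ s ∈ S, ∀ t ∈ S,
    χ.ι u = Sum.inl s → χ.ι v = Sum.inl t → (χ.G.Arc u v ↔ Din.Arc s t))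

/-- `χ` is an `(S,Y)`-containment structure relative to the ambient display graph `Din`. -/
def IsCS (Din : DispGraph V) (S : Set V) (Ys : Set Λ) (χ : CStruct V Λ) : Prop :=
  IsIsolabelling Din S Ys χ ∧
  (∀ u ∈ χ.G.verts, ∀ s ∈ S, χ.ι u = Sum.inl s →
    χ.G.inDeg u = Din.inDeg s ∧ χ.G.outDeg u = Din.outDeg s) ∧
  (∀ u ∈ χ.G.VT, χ.ι u ≠ χ.ι (χ.emb.vmap u) → χ.G.outDeg u = 2)

/-- A tree arc `uv` is `y`-redundant. -/
def TArcRedundant (χ : CStruct V Λ) (y : Λ) (u v : V) : Prop :=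
  χ.G.TArc u v ∧ χ.ι u = Sum.inr y ∧ χ.ι v = Sum.inr y ∧
    ∀ z ∈ χ.emb.pmap u v, χ.ι z = Sum.inr y

/-- A network arc `ab` is `y`-redundant. -/
def NArcRedundant (χ : CStruct V Λ) (y : Λ) (a b : V) : Prop :=
  χ.G.NArc a b ∧ χ.ι a = Sum.inr y ∧ χ.ι b = Sum.inr y ∧
    ∀ u v, χ.G.TArc u v → IsArcOf (χ.emb.pmap u v) a b → TArcRedundant χ y u v

def ArcRedundant (χ : CStruct V Λ) (y : Λ) (u v : V) : Prop :=
  TArcRedundant χ y u v ∨ NArcRedundant χ y u v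

/-- A tree vertex `v` is `y`-redundant. -/
def TVertRedundant (χ : CStruct V Λ) (y : Λ) (v : V) : Prop :=
  v ∈ χ.G.VT ∧ χ.ι v = Sum.inr y ∧ χ.ι (χ.emb.vmap v) = Sum.inr y ∧
  (∀ u, χ.G.Arc u v → ArcRedundant χ y u v) ∧
  (∀ u, χ.G.Arc v u → ArcRedundant χ y v u) ∧
  (∀ u, χ.G.Arc u (χ.emb.vmap v) → ArcRedundant χ y u (χ.emb.vmap v)) ∧
  (∀ u, χ.G.Arc (χ.emb.vmap v) u → ArcRedundant χ y (χ.emb.vmap v) u)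

/-- A network vertex `v` is `y`-redundant. -/
def NVertRedundant (χ : CStruct V Λ) (y : Λ) (v : V) : Prop :=
  v ∈ χ.G.VN ∧ χ.ι v = Sum.inr y ∧
  (∀ u, χ.G.Arc u v → ArcRedundant χ y u v) ∧
  (∀ u, χ.G.Arc v u → ArcRedundant χ y v u) ∧
  (∀ w ∈ χ.G.VT, χ.emb.vmap w = v → TVertRedundant χ y w)

def VertRedundant (χ : CStruct V Λ) (y : Λ) (v : V) : Prop :=
  TVertRedundant χ y v ∨ NVertRedundant χ y v

/-- `χ'` is the `g`-restriction of `χ`: relabel by `g` and delete all redundant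
arcs and vertices; the embedding and isolabelling are restricted accordingly. -/
def IsRestrictionOf (g : V ⊕ Λ → V ⊕ Λ) (χ' χ : CStruct V Λ) : Prop :=
  χ'.G.verts = χ.G.verts \ {v : V | ∃ y, VertRedundant (χ.relabel g) y v} ∧
  (∀ u v, χ'.G.Arc u v ↔ (χ.G.Arc u v ∧ ¬ ∃ y, ArcRedundant (χ.relabel g) y u v)) ∧
  χ'.G.VT = χ.G.VT ∩ χ'.G.verts ∧
  χ'.G.VN = χ.G.VN ∩ χ'.G.verts ∧
  (∀ v ∈ χ'.G.VT, χ'.emb.vmap v = χ.emb.vmap v) ∧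
  (∀ u v, χ'.G.TArc u v → χ'.emb.pmap u v = χ.emb.pmap u v) ∧
  (∀ v ∈ χ'.G.verts, χ'.ι v = g (χ.ι v))

/-- `g : S ∪ Y → S' ∪ Y` is a restriction function: identity on `S'`, mapping the rest
of `S` into `Y`, and mapping `Y` into `Y`. -/
def IsRestrictionFun (S S' : Set V) (Ys : Set Λ) (g : V ⊕ Λ → V ⊕ Λ) : Prop :=
  (∀ v ∈ S', g (Sum.inl v) = Sum.inl v) ∧
  (∀ v ∈ S, v ∉ S' → ∃ y ∈ Ys, g (Sum.inl v) = Sum.inr y) ∧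
  (∀ y ∈ Ys, ∃ y' ∈ Ys, g (Sum.inr y) = Sum.inr y')

/-- A well-behaved containment structure. -/
def WellBehaved (Din : DispGraph V) (Ys : Set Λ) (χ : CStruct V Λ) : Prop :=
  (∀ u v, χ.G.Arc u v → ¬ ∃ y ∈ Ys, ArcRedundant χ y u v) ∧
  (∀ v ∈ χ.G.verts, ¬ ∃ y ∈ Ys, VertRedundant χ y v) ∧
  (∀ u v, χ.G.Arc u v → ∀ y ∈ Ys, ∀ y' ∈ Ys,
    χ.ι u = Sum.inr y → χ.ι v = Sum.inr y' → y = y') ∧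
  (∀ u ∈ χ.G.verts, ∀ v ∈ χ.G.verts, ∀ s t : V, χ.ι u = Sum.inl s → χ.ι v = Sum.inl t →
    Relation.ReflTransGen χ.G.Arc u v → Relation.ReflTransGen Din.Arc s t)

/-- The labels used for signatures and reconciliations. -/
inductive Lab : Type where
  | past | future | left | right
deriving DecidableEq

/-- The restriction function sending every vertex of `P` to the label `y`. -/
noncomputable def sendVerts (P : Set V) (y : Lab) : V ⊕ Lab → V ⊕ Lab
  | Sum.inl v => if v ∈ P then Sum.inr y else Sum.inl v
  | Sum.inr y' => Sum.inr y'

/-- The restriction function sending `A` to label `a` and `B` to label `b`. -/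
noncomputable def sendVerts2 (A : Set V) (a : Lab) (B : Set V) (b : Lab) :
    V ⊕ Lab → V ⊕ Lab
  | Sum.inl v => if v ∈ A then Sum.inr a else if v ∈ B then Sum.inr b else Sum.inl v
  | Sum.inr y => Sum.inr y

/-- The restriction function merging all labels in `A` into the label `y`. -/
noncomputable def sendLabs (A : Set Lab) (y : Lab) : V ⊕ Lab → V ⊕ Lab
  | Sum.inl v => Sum.inl v
  | Sum.inr y' => if y' ∈ A then Sum.inr y else Sum.inr y'

/-- The restriction function sending label `a` to `ya` and label `b` to `yb`. -/
def sendTwoLabs (a ya b yb : Lab) : V ⊕ Lab → V ⊕ Lab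
  | Sum.inl v => Sum.inl v
  | Sum.inr y => if y = a then Sum.inr ya else if y = b then Sum.inr yb else Sum.inr y

/-- `(P,S,F)` is a bag of a tree decomposition of `Din`: a partition of the vertices
with `S` separating `P` from `F`. -/
def IsBag (Din : DispGraph V) (P S F : Set V) : Prop :=
  P ∪ S ∪ F = Din.verts ∧ Disjoint P S ∧ Disjoint P F ∧ Disjoint S F ∧
  ∀ u v, (Din.Arc u v ∨ Din.Arc v u) → u ∈ P → v ∈ F → False

def pfLabs : Set Lab := {Lab.past, Lab.future}
def lrfLabs : Set Lab := {Lab.left, Lab.right, Lab.future}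

/-- A signature for a bag with present `S` is an `(S,{past,future})`-containment structure. -/
def IsSignature (Din : DispGraph V) (S : Set V) (σ : CStruct V Lab) : Prop :=
  IsCS Din S pfLabs σ

/-- An `F`-partial solution for a bag `(P,S,F)` is a `(P∪S,{future})`-containment structure. -/
def IsPartialSolution (Din : DispGraph V) (P S : Set V) (ψ : CStruct V Lab) : Prop :=
  IsCS Din (P ∪ S) ({Lab.future} : Set Lab) ψ

/-- A (well-behaved) signature is valid for the bag `(P,S,F)` if it is the
`(P→past)`-restriction of a well-behaved `F`-partial solution. -/
def ValidSig (Din : DispGraph V) (P S F : Set V) (σ : CStruct V Lab) : Prop :=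
  ∃ ψ : CStruct V Lab, IsPartialSolution Din P S ψ ∧
    WellBehaved Din ({Lab.future} : Set Lab) ψ ∧
    IsRestrictionOf (sendVerts P Lab.past) σ ψ

/-- A reconciliation for a Join bag with present `S` is an
`(S,{left,right,future})`-containment structure. -/
def IsReconciliation (Din : DispGraph V) (S : Set V) (μ : CStruct V Lab) : Prop :=
  IsCS Din S lrfLabs μ

/-- A reconciliation is valid for the Join bag `(L∪R,S,F)` if it is the
`(L→left, R→right)`-restriction of a well-behaved `F`-partial solution. -/
def ValidRecon (Din : DispGraph V) (L R S F : Set V) (μ : CStruct V Lab) : Prop :=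
  ∃ ψ : CStruct V Lab, IsCS Din (L ∪ R ∪ S) ({Lab.future} : Set Lab) ψ ∧
    WellBehaved Din ({Lab.future} : Set Lab) ψ ∧
    IsRestrictionOf (sendVerts2 L Lab.left R Lab.right) μ ψ

/-- `z` is an internal vertex of the replacement path `Pm u v`. -/
def internalOf (Pm : V → V → List V) (u v z : V) : Prop :=
  z ∈ Pm u v ∧ z ≠ u ∧ z ≠ v

/-- `σ₀` is a subdivision of the containment structure `σ`, with each network
arc `uv` of `σ` replaced by the path `Pm u v`. -/
def IsSubdivisionOfCS (σ₀ σ : CStruct V Λ) (Pm : V → V → List V) : Prop :=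
  σ₀.G.VT = σ.G.VT ∧
  (∀ u v, σ₀.G.TArc u v ↔ σ.G.TArc u v) ∧
  σ.G.VN ⊆ σ₀.G.VN ∧
  σ₀.G.verts = σ.G.verts ∪ {z : V | ∃ u v, σ.G.NArc u v ∧ z ∈ Pm u v} ∧
  (∀ u v, σ.G.NArc u v → DipathFrom σ₀.G.NArc u v (Pm u v) ∧ 2 ≤ (Pm u v).length) ∧
  (∀ u v, σ.G.NArc u v → 2 < (Pm u v).length →
    ∃ y : Λ, σ.ι u = Sum.inr y ∧ σ.ι v = Sum.inr y) ∧
  (∀ u v, σ.G.NArc u v → ∀ z, internalOf Pm u v z →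
    z ∉ σ.G.verts ∧ z ∈ σ₀.G.VN ∧ σ₀.ι z = σ.ι u) ∧
  (∀ u v u' v', σ.G.NArc u v → σ.G.NArc u' v' → (u, v) ≠ (u', v') →
    ∀ z, internalOf Pm u v z → ¬ internalOf Pm u' v' z) ∧
  (∀ a b, σ₀.G.NArc a b ↔ ∃ u v, σ.G.NArc u v ∧ IsArcOf (Pm u v) a b) ∧
  (∀ v ∈ σ.G.verts, σ₀.ι v = σ.ι v) ∧
  (∀ v ∈ σ.G.VT, σ₀.emb.vmap v = σ.emb.vmap v) ∧
  (∀ u v, σ.G.TArc u v →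
    (σ₀.emb.pmap u v).head? = (σ.emb.pmap u v).head? ∧
    (σ₀.emb.pmap u v).getLast? = (σ.emb.pmap u v).getLast? ∧
    ∀ a b, IsArcOf (σ₀.emb.pmap u v) a b ↔
      ∃ c d, IsArcOf (σ.emb.pmap u v) c d ∧ IsArcOf (Pm c d) a b)

/-- `χ` has a long `y`-path: a suppressible degree-(1,1) network vertex between two
network arcs, all three vertices labelled `y`, with no tree vertex embedded into it. -/
def LongYPath (χ : CStruct V Λ) (y : Λ) : Prop :=
  ∃ x₁ x₂ x₃ : V, χ.G.NArc x₁ x₂ ∧ χ.G.NArc x₂ x₃ ∧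
    {u : V | χ.G.NArc u x₂}.ncard = 1 ∧ {u : V | χ.G.NArc x₂ u}.ncard = 1 ∧
    χ.ι x₁ = Sum.inr y ∧ χ.ι x₂ = Sum.inr y ∧ χ.ι x₃ = Sum.inr y ∧
    ∀ w ∈ χ.G.VT, χ.emb.vmap w ≠ x₂

def IsCompact (χ : CStruct V Λ) : Prop := ∀ y : Λ, ¬ LongYPath χ y

/-- `σ` is the compact form of `σ₀`: `σ` is compact and `σ₀` is a subdivision of `σ`. -/
def IsCompactFormOf (σ σ₀ : CStruct V Λ) : Prop :=
  IsCompact σ ∧ ∃ Pm : V → V → List V, IsSubdivisionOfCS σ₀ σ Pm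

/-- Isomorphism of containment structures. -/
def CSIso (χ χ' : CStruct V Λ) : Prop :=
  ∃ f : V → V, Set.BijOn f χ.G.verts χ'.G.verts ∧
    (∀ v ∈ χ.G.verts, (v ∈ χ.G.VT ↔ f v ∈ χ'.G.VT)) ∧
    (∀ v ∈ χ.G.verts, (v ∈ χ.G.VN ↔ f v ∈ χ'.G.VN)) ∧
    (∀ u ∈ χ.G.verts, ∀ v ∈ χ.G.verts, (χ.G.Arc u v ↔ χ'.G.Arc (f u) (f v))) ∧
    (∀ v ∈ χ.G.verts, χ'.ι (f v) = χ.ι v) ∧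
    (∀ v ∈ χ.G.VT, χ'.emb.vmap (f v) = f (χ.emb.vmap v)) ∧
    (∀ u v, χ.G.TArc u v → χ'.emb.pmap (f u) (f v) = (χ.emb.pmap u v).map f)

lemma isArcOf_iff {p : List V} {a b : V} :
    IsArcOf p a b ↔ ∃ (i : ℕ) (h : i + 1 < p.length),
      p[i]'(by omega) = a ∧ p[i+1]'h = b := by
  unfold IsArcOf listArcs
  rw [List.mem_iff_getElem]
  constructor
  · rintro ⟨i, hi, hget⟩
    have hlen : i + 1 < p.length := by
      rw [List.length_zip, List.length_tail] at hi; omega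
    rw [List.getElem_zip] at hget
    refine ⟨i, hlen, (Prod.ext_iff.mp hget).1, ?_⟩
    have h2 := (Prod.ext_iff.mp hget).2
    rwa [List.getElem_tail] at h2
  · rintro ⟨i, hi, h1, h2⟩
    refine ⟨i, by rw [List.length_zip, List.length_tail]; omega, ?_⟩
    rw [List.getElem_zip, List.getElem_tail]
    exact Prod.ext h1 h2

lemma arc_of_chain' {R : V → V → Prop} {p : List V} (h : p.Chain' R) {a b : V}
    (hab : IsArcOf p a b) : R a b := by
  obtain ⟨i, hi, rfl, rfl⟩ := isArcOf_iff.mp hab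
  exact List.isChain_iff_getElem.mp h i (by omega)

lemma chain'_isArcOf (p : List V) : p.Chain' (fun a b => IsArcOf p a b) := by
  refine List.isChain_iff_getElem.mpr ?_
  intro i hi
  exact isArcOf_iff.mpr ⟨i, by omega, rfl, rfl⟩

lemma head_getElem {p : List V} {s : V} (h : p.head? = some s) :
    ∃ h0 : 0 < p.length, p[0]'h0 = s := by
  rw [List.head?_eq_getElem?] at h
  have h0 : 0 < p.length := by
    by_contra hc
    simp [List.getElem?_eq_none (by omega : p.length ≤ 0)] at h
  exact ⟨h0, by rw [List.getElem?_eq_getElem h0] at h; exact Option.some_inj.mp h⟩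

lemma last_getElem {p : List V} {t : V} (h : p.getLast? = some t) :
    ∃ h0 : p.length - 1 < p.length, p[p.length - 1]'h0 = t := by
  rw [List.getLast?_eq_getElem?] at h
  have h0 : 0 < p.length := by
    by_contra hc
    have : p.length = 0 := by omega
    simp [List.getElem?_eq_none (by omega : p.length ≤ p.length - 1)] at h
  refine ⟨by omega, ?_⟩
  rw [List.getElem?_eq_getElem (by omega)] at h
  exact Option.some_inj.mp h


lemma dipath_arc_ends {A : V → V → Prop} {s t : V} {p : List V}
    (hp : DipathFrom A s t p) {a b : V} (hab : IsArcOf p a b)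
    (ha : a = s ∨ a = t) (hb : b = s ∨ b = t) : a = s ∧ b = t := by
  obtain ⟨hch, hnd, hh, hl⟩ := hp
  obtain ⟨i, hi, hia, hib⟩ := isArcOf_iff.mp hab
  obtain ⟨h0, hs⟩ := head_getElem hh
  obtain ⟨hL, ht⟩ := last_getElem hl
  constructor
  · rcases ha with rfl | rfl
    · rfl
    · exfalso
      have : i = p.length - 1 := (hnd.getElem_inj_iff).mp (hia.trans ht.symm)
      omega
  · rcases hb with rfl | rfl
    · exfalso
      have : i + 1 = 0 := (hnd.getElem_inj_iff).mp (hib.trans hs.symm)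
      omega
    · rfl

lemma dipath_head_mem {A : V → V → Prop} {s t : V} {p : List V}
    (hp : DipathFrom A s t p) : s ∈ p := by
  obtain ⟨h0, hs⟩ := head_getElem hp.2.2.1
  exact hs ▸ List.getElem_mem h0

lemma dipath_last_mem {A : V → V → Prop} {s t : V} {p : List V}
    (hp : DipathFrom A s t p) : t ∈ p := by
  obtain ⟨h0, ht⟩ := last_getElem hp.2.2.2
  exact ht ▸ List.getElem_mem h0

lemma dipath_mem {A : V → V → Prop} {s t : V} {p : List V}
    (hp : DipathFrom A s t p) {z : V} (hz : z ∈ p) :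
    z = s ∨ ∃ a, A a z := by
  obtain ⟨i, hi, rfl⟩ := List.mem_iff_getElem.mp hz
  rcases Nat.eq_zero_or_pos i with rfl | hpos
  · left
    obtain ⟨h0, hs⟩ := head_getElem hp.2.2.1
    exact hs
  · right
    refine ⟨p[i-1]'(by omega), ?_⟩
    have harc : IsArcOf p (p[i-1]'(by omega)) (p[i]'hi) :=
      isArcOf_iff.mpr ⟨i - 1, by omega, rfl, by congr 1; omega⟩
    exact arc_of_chain' hp.1 harc

lemma tree_incident {T : DGraph V} (hT : IsBinPhyloTree T) {v : V} (hv : v ∈ T.verts) :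
    (∃ u, T.Arc u v) ∨ ∃ u, T.Arc v u := by
  have hdeg := hT.1.2.2.2.2 v hv
  rcases hdeg with ⟨h1, h2⟩ | ⟨h1, h2⟩ | ⟨h1, h2⟩ | ⟨h1, h2⟩
  · right
    have h2' : {u : V | T.Arc v u}.ncard = 2 := h2
    exact Set.nonempty_of_ncard_ne_zero (s := {u : V | T.Arc v u}) (by omega)
  · left
    have h1' : {u : V | T.Arc u v}.ncard = 1 := h1
    exact Set.nonempty_of_ncard_ne_zero (s := {u : V | T.Arc u v}) (by omega)
  · left
    have h1' : {u : V | T.Arc u v}.ncard = 2 := h1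
    exact Set.nonempty_of_ncard_ne_zero (s := {u : V | T.Arc u v}) (by omega)
  · left
    have h1' : {u : V | T.Arc u v}.ncard = 1 := h1
    exact Set.nonempty_of_ncard_ne_zero (s := {u : V | T.Arc u v}) (by omega)

theorem displays_iff_embedding' {V : Type} (N T : DGraph V)
    (hN : IsBinPhyloNet N) (hT : IsBinPhyloTree T) (hShared : SharedLeaves N T) :
    Displays N T ↔ Nonempty (EmbOn T N) := by
  constructor
  · rintro ⟨H, hSub, w, hfix⟩
    refine ⟨⟨w.vmap, w.pmap, ?_, ?_, ?_, ?_, ?_, ?_⟩⟩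
    · intro u hu
      exact hSub.1 (w.vmap_mem u hu)
    · intro u v huv
      obtain ⟨hch, hnd, hh, hl⟩ := w.path_spec huv
      exact ⟨List.IsChain.imp (fun ⦃a b⦄ h => hSub.2 h) hch, hnd, hh, hl⟩
    · exact w.inj
    · exact hfix
    · -- arc_disjoint
      intro u v u' v' huv hu'v' hne e he he'
      obtain ⟨a, b, rfl⟩ : ∃ a b, e = (a, b) := ⟨e.1, e.2, rfl⟩
      have haboth := w.internal_disjoint huv hu'v' hne a
        (isArcOf_mem_left he) (isArcOf_mem_left he')
      have hbboth := w.internal_disjoint huv hu'v' hne b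
        (isArcOf_mem_right he) (isArcOf_mem_right he')
      have h1 := dipath_arc_ends (w.path_spec huv) he haboth.1 hbboth.1
      have h2 := dipath_arc_ends (w.path_spec hu'v') he' haboth.2 hbboth.2
      have hu : u = u' := w.inj u (T.arc_left huv) u' (T.arc_left hu'v')
        (h1.1.symm.trans h2.1)
      have hv : v = v' := w.inj v (T.arc_right huv) v' (T.arc_right hu'v')
        (h1.2.symm.trans h2.2)
      exact hne (by rw [hu, hv])
    · -- share
      intro u v u' v' huv hu'v' hne z hz hz'
      have h := w.internal_disjoint huv hu'v' hne z hz hz'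
      rcases h.1 with rfl | rfl
      · rcases h.2 with h2 | h2
        · exact ⟨u, Or.inl rfl, Or.inl (w.inj u (T.arc_left huv) u' (T.arc_left hu'v') h2), rfl⟩
        · exact ⟨u, Or.inl rfl, Or.inr (w.inj u (T.arc_left huv) v' (T.arc_right hu'v') h2), rfl⟩
      · rcases h.2 with h2 | h2
        · exact ⟨v, Or.inr rfl, Or.inl (w.inj v (T.arc_right huv) u' (T.arc_left hu'v') h2), rfl⟩
        · exact ⟨v, Or.inr rfl, Or.inr (w.inj v (T.arc_right huv) v' (T.arc_right hu'v') h2), rfl⟩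
  · rintro ⟨φ⟩
    refine ⟨usedSubgraph T N φ, ⟨?_, ?_⟩, ⟨φ.vmap, φ.pmap, ?_, φ.inj, ?_, ?_, ?_, ?_, ?_, ?_⟩, ?_⟩
    · -- verts ⊆ N.verts
      rintro z ⟨u, v, huv, hz⟩
      rcases dipath_mem (φ.path_spec huv) hz with rfl | ⟨a, ha⟩
      · exact φ.vmap_mem u (T.arc_left huv)
      · exact N.arc_right ha
    · rintro a b ⟨u, v, huv, harc⟩
      exact arc_of_chain' (φ.path_spec huv).1 harc
    · -- vmap_mem into usedSubgraph verts
      intro u hu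
      rcases tree_incident hT hu with ⟨x, hx⟩ | ⟨x, hx⟩
      · exact ⟨x, u, hx, dipath_last_mem (φ.path_spec hx)⟩
      · exact ⟨u, x, hx, dipath_head_mem (φ.path_spec hx)⟩
    · -- path_spec with usedSubgraph arcs
      intro u v huv
      obtain ⟨hch, hnd, hh, hl⟩ := φ.path_spec huv
      refine ⟨?_, hnd, hh, hl⟩
      exact List.IsChain.imp (fun ⦃a b⦄ h => ⟨u, v, huv, h⟩) (chain'_isArcOf (φ.pmap u v))
    · -- path_len
      intro u v huv
      by_contra hlen
      push_neg at hlen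
      obtain ⟨hch, hnd, hh, hl⟩ := φ.path_spec huv
      obtain ⟨h0, hs⟩ := head_getElem hh
      obtain ⟨hL, ht⟩ := last_getElem hl
      have hlen1 : (φ.pmap u v).length = 1 := by omega
      have heq : φ.vmap u = φ.vmap v := by
        rw [← hs, ← ht]; congr 1; omega
      have := φ.inj u (T.arc_left huv) v (T.arc_right huv) heq
      subst this
      exact hT.1.1 u (Relation.TransGen.single huv)
    · -- internal_new
      intro u v huv z hz hzu hzv w hw hwz
      rcases tree_incident hT hw with ⟨x, hx⟩ | ⟨x, hx⟩
      · by_cases hcase : (x, w) = (u, v)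
        · rw [Prod.mk.injEq] at hcase
          obtain ⟨rfl, rfl⟩ := hcase
          exact hzv hwz.symm
        · obtain ⟨w', hw1, hw2, hw3⟩ := φ.share hx huv hcase z
            (hwz ▸ dipath_last_mem (φ.path_spec hx)) hz
          rcases hw2 with rfl | rfl
          · exact hzu hw3.symm
          · exact hzv hw3.symm
      · by_cases hcase : (w, x) = (u, v)
        · rw [Prod.mk.injEq] at hcase
          obtain ⟨rfl, rfl⟩ := hcase
          exact hzu hwz.symm
        · obtain ⟨w', hw1, hw2, hw3⟩ := φ.share hx huv hcase z
            (hwz ▸ dipath_head_mem (φ.path_spec hx)) hz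
          rcases hw2 with rfl | rfl
          · exact hzu hw3.symm
          · exact hzv hw3.symm
    · -- internal_disjoint
      intro u v u' v' huv hu'v' hne z hz hz'
      obtain ⟨w', hw1, hw2, hw3⟩ := φ.share huv hu'v' hne z hz hz'
      constructor
      · rcases hw1 with rfl | rfl
        · exact Or.inl hw3.symm
        · exact Or.inr hw3.symm
      · rcases hw2 with rfl | rfl
        · exact Or.inl hw3.symm
        · exact Or.inr hw3.symm
    · -- arcs_cover
      intro a b hab
      exact hab
    · -- verts_cover
      intro z hz
      exact Or.inr hz
    · -- fixes
      exact φ.fixes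


/-- A rooted binary phylogenetic network `N` displays a rooted binary
phylogenetic tree `T` (on the same leaf-label set, encoded by the identification of
equally labelled leaves) if and only if there is an embedding function on the display
graph `D(N,T)`. -/
theorem displays_iff_embedding {V : Type} (N T : DGraph V)
    (hN : IsBinPhyloNet N) (hT : IsBinPhyloTree T) (hShared : SharedLeaves N T) :
    Displays N T ↔ Nonempty (EmbOn T N) :=
  displays_iff_embedding' N T hN hT hShared

end TreeContainment
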